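/- Let S be a nonempty finite multiset of positive integers with n = |S| ≤ 3 and m = max(S). If P is a finite poset whose multiset of maximal chain cardinalities equals S, then |P| ≥ m + n − 1. -/

import Mathlib

/-!
Two maximal chains that differ from a fixed chain `C` in the same elements coincide: their union
is still a chain, since any two of its elements lie together in one of the two chains or in `C`.
So a maximal chain `D` is determined by `D \ C`, and a finite poset has at most `2 ^ (|P| - |C|)`
maximal chains. Taking for `C` a maximal chain with `m` elements gives `n ≤ 2 ^ (|P| - m)`, which
for `n ≤ 3` is the same as `n - 1 ≤ |P| - m`.
-/

open scoped Classical in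
/-- The finite set of maximal chains of a finite poset, as finsets. -/
noncomputable def maxChains (α : Type*) [Fintype α] [PartialOrder α] : Finset (Finset α) :=
  Finset.univ.filter (fun s : Finset α => IsMaxChain (· ≤ ·) (s : Set α))

/-- The multiset of cardinalities of the maximal chains of a finite poset. -/
noncomputable def mcMultiset (α : Type*) [Fintype α] [PartialOrder α] : Multiset ℕ :=
  (maxChains α).val.map Finset.card

theorem IsMaxChain.eq_of_diff_eq {α : Type*} {r : α → α → Prop} {c s t : Set α}
    (hc : IsChain r c) (hs : IsMaxChain r s) (ht : IsMaxChain r t) (h : s \ c = t \ c) :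
    s = t := by
  have hpair : ∀ x ∈ s ∪ t, ∀ y ∈ s ∪ t,
      (x ∈ s ∧ y ∈ s) ∨ (x ∈ t ∧ y ∈ t) ∨ (x ∈ c ∧ y ∈ c) := by
    intro x hx y hy
    have hx' := congrArg (x ∈ ·) h
    have hy' := congrArg (y ∈ ·) h
    simp only [Set.mem_sdiff, eq_iff_iff] at hx' hy'
    rcases hx with hx | hx <;> rcases hy with hy | hy <;> tauto
  have hchain : IsChain r (s ∪ t) := by
    intro x hx y hy hxy
    rcases hpair x hx y hy with ⟨hx, hy⟩ | ⟨hx, hy⟩ | ⟨hx, hy⟩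
    exacts [hs.1 hx hy hxy, ht.1 hx hy hxy, hc hx hy hxy]
  have hts : t ⊆ s := (hs.2 hchain Set.subset_union_left).symm ▸ Set.subset_union_right
  have hst : s ⊆ t := (ht.2 hchain Set.subset_union_right).symm ▸ Set.subset_union_left
  exact hst.antisymm hts

section FinitePoset

variable {α : Type*} [Fintype α] [PartialOrder α]

theorem mem_maxChains {C : Finset α} : C ∈ maxChains α ↔ IsMaxChain (· ≤ ·) (C : Set α) := by
  classical
  simp [maxChains]

theorem card_maxChains_le_two_pow {C : Finset α} (hC : IsChain (· ≤ ·) (C : Set α)) :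
    (maxChains α).card ≤ 2 ^ (Fintype.card α - C.card) := by
  classical
  have hinj : Set.InjOn (· \ C) (maxChains α : Set (Finset α)) := by
    intro D hD E hE hDE
    exact Finset.coe_injective <|
      IsMaxChain.eq_of_diff_eq hC (mem_maxChains.1 hD) (mem_maxChains.1 hE) (mod_cast hDE)
  calc (maxChains α).card ≤ Cᶜ.powerset.card :=
        Finset.card_le_card_of_injOn _ (fun D _ ↦ by simp) hinj
    _ = 2 ^ (Fintype.card α - C.card) := by rw [Finset.card_powerset, Finset.card_compl]

theorem card_mcMultiset_le_two_pow {m : ℕ} (hm : m ∈ mcMultiset α) :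
    Multiset.card (mcMultiset α) ≤ 2 ^ (Fintype.card α - m) := by
  obtain ⟨C, hC, rfl⟩ := Multiset.mem_map.1 hm
  exact (Multiset.card_map _ _).trans_le (card_maxChains_le_two_pow (mem_maxChains.1 hC).1)

theorem le_card_of_mem_mcMultiset {m : ℕ} (hm : m ∈ mcMultiset α) : m ≤ Fintype.card α := by
  obtain ⟨C, -, rfl⟩ := Multiset.mem_map.1 hm
  exact Finset.card_le_univ C

end FinitePoset

theorem Nat.le_succ_of_le_two_pow_of_le_three {n k : ℕ} (h : n ≤ 2 ^ k) (hn : n ≤ 3) :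
    n ≤ k + 1 := by
  rcases k with _ | _ | k
  · simpa using h
  · simpa using h
  · omega

theorem small_multiset_lower_bound_general {α : Type*} [Fintype α] [PartialOrder α]
    (S : Multiset ℕ) (hS : mcMultiset α = S) (hn : Multiset.card S ≤ 3)
    (m : ℕ) (hm : m ∈ S) :
    m + Multiset.card S - 1 ≤ Fintype.card α := by
  subst hS
  have hm_le := le_card_of_mem_mcMultiset hm
  have hcard := Nat.le_succ_of_le_two_pow_of_le_three (card_mcMultiset_le_two_pow hm) hn
  omega

theorem small_multiset_lower_bound {α : Type*} [Fintype α] [PartialOrder α]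
    (S : Multiset ℕ) (hS : mcMultiset α = S) (hn : Multiset.card S ≤ 3)
    (hpos : ∀ x ∈ S, 0 < x) (m : ℕ) (hm : m ∈ S) (hmax : ∀ x ∈ S, x ≤ m) :
    m + Multiset.card S - 1 ≤ Fintype.card α :=
  small_multiset_lower_bound_general S hS hn m hm
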